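/- arXiv:1210.3332 — 3 statements merged into one kernel-verified Lean document; each statement's English description precedes it below -/
import Mathlib

section
/- Let E, F be Banach spaces, P : E → F a continuous n-homogeneous polynomial with symmetric n-linear form P̌, μ a regular Borel probability measure on (B_{E'}, w*), 0 < p < ∞, and x, y ∈ E. Suppose that for each k = 1,…,n there is a constant C_k > 0 such that ‖(n!/(n−k)!) P̌(y^{n−k}, zᵏ)‖ ≤ C_k (∫_{B_{E'}} |φ(z)|^p dμ(φ))^{k/p} for all z ∈ E. If ∫_{B_{E'}} |φ(x − y)|^p dμ(φ) = 0, then P(x) = P(y). -/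
/-!
Writing `x = (x - y) + y` and expanding `P̌(x, …, x)` multilinearly, symmetry of `P̌` groups the
terms by the number `k` of slots holding `x - y`; each group with `k ≥ 1` is a multiple of
`d̂ᵏP(y)(x - y)`, which the domination hypothesis bounds by `C_k · 0^{k/p} = 0`. Only the term
`P̌(y, …, y) = P(y)` survives.
-/

open MeasureTheory Finset

theorem apply_piecewise_eq_of_card_eq {ι α β : Type*} [Fintype ι] [DecidableEq ι]
    {g : (ι → α) → β} (hg : ∀ σ : Equiv.Perm ι, ∀ m, g (fun i => m (σ i)) = g m)
    (a b : α) {s t : Finset ι} (hst : #s = #t) :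
    g (s.piecewise (fun _ => a) (fun _ => b)) = g (t.piecewise (fun _ => a) (fun _ => b)) := by
  let e := Finset.equivOfCardEq hst
  rw [← hg e.extendSubtype (t.piecewise _ _)]
  congr 1
  funext i
  by_cases hi : i ∈ s
  · rw [piecewise_eq_of_mem _ _ _ hi, piecewise_eq_of_mem _ _ _ (e.extendSubtype_mem i hi)]
  · rw [piecewise_eq_of_notMem _ _ _ hi,
      piecewise_eq_of_notMem _ _ _ (e.extendSubtype_not_mem i hi)]

theorem Fin.card_filter_not_val_lt_sub {n k : ℕ} (hk : k ≤ n) :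
    #{i : Fin n | ¬ (i : ℕ) < n - k} = k := by
  rw [filter_not, card_sdiff_of_subset (filter_subset _ _), card_univ, Fintype.card_fin,
    Fin.card_filter_val_lt]
  omega

theorem MultilinearMap.map_const_add_eq_of_symmetric {R M N : Type*} [CommSemiring R]
    [AddCommMonoid M] [AddCommMonoid N] [Module R M] [Module R N] {n : ℕ}
    (f : MultilinearMap R (fun _ : Fin n => M) N)
    (hf : ∀ σ : Equiv.Perm (Fin n), ∀ m, f (fun i => m (σ i)) = f m) (y z : M)
    (h : ∀ k, 1 ≤ k → k ≤ n → f (fun i => if (i : ℕ) < n - k then y else z) = 0) :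
    f (fun _ => z + y) = f (fun _ => y) := by
  classical
  rw [show (fun _ : Fin n => z + y) = (fun _ => z) + (fun _ => y) from rfl, f.map_add_univ,
    sum_eq_single (∅ : Finset (Fin n)) _ (by simp), piecewise_empty]
  intro s _ hs
  have hk : 1 ≤ #s := card_pos.mpr (nonempty_iff_ne_empty.mpr hs)
  have hkn : #s ≤ n := by simpa using card_le_univ s
  rw [apply_piecewise_eq_of_card_eq hf z y (Fin.card_filter_not_val_lt_sub hkn).symm]
  convert h #s hk hkn using 2
  funext i
  simp only [piecewise, mem_filter, mem_univ, true_and, ite_not]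

theorem stmt_10_general (n : ℕ)
    (E : Type*) [NormedAddCommGroup E] [NormedSpace ℝ E]
    (F : Type*) [NormedAddCommGroup F] [NormedSpace ℝ F]
    [MeasurableSpace (WeakDual ℝ E)]
    (μ : Measure {φ : WeakDual ℝ E // ‖WeakDual.toStrongDual φ‖ ≤ 1})
    (p : ℝ) (hp : 0 < p)
    (P : E → F) (Pc : ContinuousMultilinearMap ℝ (fun _ : Fin n => E) F)
    (hPsym : ∀ σ : Equiv.Perm (Fin n), ∀ m, Pc (fun i => m (σ i)) = Pc m)
    (hP : ∀ z, P z = Pc (fun _ => z))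
    (x y : E) (C : ℕ → ℝ)
    (hdom : ∀ k, 1 ≤ k → k ≤ n → ∀ z : E,
      ‖((n.factorial : ℝ) / ((n - k).factorial : ℝ)) •
          Pc (fun i : Fin n => if (i : ℕ) < n - k then y else z)‖ ≤
        C k * (∫ φ, ‖(φ : {φ : WeakDual ℝ E //
          ‖WeakDual.toStrongDual φ‖ ≤ 1}).1 z‖ ^ p ∂μ) ^ ((k : ℝ) / p))
    (hnull : (∫ φ, ‖(φ : {φ : WeakDual ℝ E //
      ‖WeakDual.toStrongDual φ‖ ≤ 1}).1 (x - y)‖ ^ p ∂μ) = 0) :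
    P x = P y := by
  have hmixed : ∀ k, 1 ≤ k → k ≤ n →
      Pc (fun i : Fin n => if (i : ℕ) < n - k then y else x - y) = 0 := by
    intro k hk hkn
    have hexp : (k : ℝ) / p ≠ 0 := by positivity
    have h := hdom k hk hkn (x - y)
    rw [hnull, Real.zero_rpow hexp, mul_zero, norm_le_zero_iff, smul_eq_zero] at h
    exact h.resolve_left (by positivity)
  rw [hP, hP]
  simpa using Pc.toMultilinearMap.map_const_add_eq_of_symmetric hPsym y (x - y) hmixed

/-- If `μ` is a Pietsch measure for every derivative `d̂ᵏP(y)` of an `n`-homogeneous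
polynomial `P`, and `∫ |φ(x−y)|^p dμ = 0`, then `P(x) = P(y)`. -/
theorem stmt_10 (n : ℕ)
    (E : Type*) [NormedAddCommGroup E] [NormedSpace ℝ E] [CompleteSpace E]
    (F : Type*) [NormedAddCommGroup F] [NormedSpace ℝ F] [CompleteSpace F]
    [MeasurableSpace (WeakDual ℝ E)] [BorelSpace (WeakDual ℝ E)]
    (μ : Measure {φ : WeakDual ℝ E // ‖WeakDual.toStrongDual φ‖ ≤ 1})
    [IsProbabilityMeasure μ] (hreg : μ.Regular)
    (p : ℝ) (hp : 0 < p)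
    (P : E → F) (Pc : ContinuousMultilinearMap ℝ (fun _ : Fin n => E) F)
    (hPsym : ∀ σ : Equiv.Perm (Fin n), ∀ m, Pc (fun i => m (σ i)) = Pc m)
    (hP : ∀ z, P z = Pc (fun _ => z))
    (x y : E) (C : ℕ → ℝ) (hCpos : ∀ k, 1 ≤ k → k ≤ n → 0 < C k)
    (hdom : ∀ k, 1 ≤ k → k ≤ n → ∀ z : E,
      ‖((n.factorial : ℝ) / ((n - k).factorial : ℝ)) •
          Pc (fun i : Fin n => if (i : ℕ) < n - k then y else z)‖ ≤
        C k * (∫ φ, ‖(φ : {φ : WeakDual ℝ E //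
          ‖WeakDual.toStrongDual φ‖ ≤ 1}).1 z‖ ^ p ∂μ) ^ ((k : ℝ) / p))
    (hnull : (∫ φ, ‖(φ : {φ : WeakDual ℝ E //
      ‖WeakDual.toStrongDual φ‖ ≤ 1}).1 (x - y)‖ ^ p ∂μ) = 0) :
    P x = P y :=
  stmt_10_general n E F μ p hp P Pc hPsym hP x y C hdom hnull
end

section
/- Let E be a real or complex Banach space, μ a regular Borel probability measure on (B_{E'}, w*), n a positive integer, p ≥ n, and P : E → L_{p/n}(μ) the n-homogeneous polynomial P(x) = [φ ↦ φ(x)ⁿ]. Then the associated symmetric n-linear map is P̌(x₁,…,xₙ) = [φ ↦ φ(x₁)φ(x₂)⋯φ(xₙ)], and for every a ∈ E, k ∈ {1,…,n}, and x ∈ E: ‖d̂ᵏP(a)(x)‖_{L_{p/n}} ≤ (n!/(n−k)!) ‖a‖^{n−k} (∫_{B_{E'}} |φ(x)|^p dμ(φ))^{k/p}. In particular μ is a differential Pietsch measure for P. -/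
/-!
For `φ` in the dual unit ball, `|φ(a)^{n-k} φ(x)^k|^{p/n} ≤ ‖a‖^{(n-k)p/n} (|φ(x)|^p)^{k/n}`
pointwise. Since `μ` is a probability measure and `t ↦ t^{k/n}` is concave, Jensen's inequality
bounds `∫ (|φ(x)|^p)^{k/n} dμ` by `(∫ |φ(x)|^p dμ)^{k/n}`; raising to the power `n/p` gives the
estimate.
-/

open MeasureTheory

theorem Real.rpow_le_one_add {x r : ℝ} (hx : 0 ≤ x) (hr0 : 0 ≤ r) (hr1 : r ≤ 1) :
    x ^ r ≤ 1 + x := by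
  rcases le_total x 1 with hx1 | hx1
  · linarith [Real.rpow_le_one hx hx1 hr0]
  · have := Real.rpow_le_rpow_of_exponent_le hx1 hr1
    rw [Real.rpow_one] at this
    linarith

section

variable {Ω : Type*} [MeasurableSpace Ω] {μ : Measure Ω}

theorem MeasureTheory.Integrable.rpow_of_le_one [IsFiniteMeasure μ] {g : Ω → ℝ}
    (hg : Integrable g μ) (hg0 : 0 ≤ g) {r : ℝ} (hr0 : 0 ≤ r) (hr1 : r ≤ 1) :
    Integrable (fun ω ↦ g ω ^ r) μ := by
  refine ((integrable_const 1).add hg).mono'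
    ((Real.continuous_rpow_const hr0).comp_aestronglyMeasurable hg.aestronglyMeasurable) ?_
  filter_upwards with ω
  rw [Real.norm_of_nonneg (Real.rpow_nonneg (hg0 ω) r)]
  exact Real.rpow_le_one_add (hg0 ω) hr0 hr1

theorem integral_rpow_le_rpow_integral [IsProbabilityMeasure μ] {g : Ω → ℝ} (hg : Integrable g μ)
    (hg0 : 0 ≤ g) {r : ℝ} (hr0 : 0 ≤ r) (hr1 : r ≤ 1) :
    ∫ ω, g ω ^ r ∂μ ≤ (∫ ω, g ω ∂μ) ^ r :=
  (Real.concaveOn_rpow hr0 hr1).le_map_integral (Real.continuous_rpow_const hr0).continuousOn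
    isClosed_Ici (.of_forall hg0) hg (hg.rpow_of_le_one hg0 hr0 hr1)

theorem norm_pow_mul_pow_rpow_le {𝕜 : Type*} [NormedDivisionRing 𝕜] {s t : 𝕜} {A p : ℝ}
    (hs : ‖s‖ ≤ A) (hp : 0 ≤ p) {n k : ℕ} :
    ‖s ^ (n - k) * t ^ k‖ ^ (p / n) ≤ (A ^ (n - k)) ^ (p / n) * (‖t‖ ^ p) ^ ((k : ℝ) / n) := by
  rw [norm_mul, norm_pow, norm_pow, Real.mul_rpow (by positivity) (by positivity),
    ← Real.rpow_natCast ‖t‖, ← Real.rpow_mul (norm_nonneg t), ← Real.rpow_mul (norm_nonneg t),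
    mul_div_left_comm]
  gcongr

theorem rpow_integral_norm_pow_mul_pow_le [IsProbabilityMeasure μ] {𝕜 : Type*}
    [NormedDivisionRing 𝕜] {u v : Ω → 𝕜} {A p : ℝ} (hu : ∀ ω, ‖u ω‖ ≤ A)
    (hv : Integrable (fun ω ↦ ‖v ω‖ ^ p) μ) (hp : 0 < p) {n k : ℕ} (hn : 0 < n) (hkn : k ≤ n) :
    (∫ ω, ‖u ω ^ (n - k) * v ω ^ k‖ ^ (p / n) ∂μ) ^ ((n : ℝ) / p) ≤
      A ^ (n - k) * (∫ ω, ‖v ω‖ ^ p ∂μ) ^ ((k : ℝ) / p) := by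
  obtain ⟨ω₀⟩ := nonempty_of_isProbabilityMeasure μ
  have hA : 0 ≤ A := (norm_nonneg _).trans (hu ω₀)
  have hn' : (0 : ℝ) < n := by exact_mod_cast hn
  have hkn' : (k : ℝ) / n ≤ 1 := div_le_one_of_le₀ (by exact_mod_cast hkn) hn'.le
  have hv0 : 0 ≤ fun ω ↦ ‖v ω‖ ^ p := fun ω ↦ by positivity
  have hint : ∫ ω, ‖u ω ^ (n - k) * v ω ^ k‖ ^ (p / n) ∂μ ≤
      (A ^ (n - k)) ^ (p / n) * ∫ ω, (‖v ω‖ ^ p) ^ ((k : ℝ) / n) ∂μ := by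
    rw [← integral_const_mul]
    exact integral_mono_of_nonneg (.of_forall fun ω ↦ by positivity)
      ((hv.rpow_of_le_one hv0 (by positivity) hkn').const_mul _)
      (.of_forall fun ω ↦ norm_pow_mul_pow_rpow_le (hu ω) hp.le)
  calc (∫ ω, ‖u ω ^ (n - k) * v ω ^ k‖ ^ (p / n) ∂μ) ^ ((n : ℝ) / p)
      ≤ ((A ^ (n - k)) ^ (p / n) * (∫ ω, ‖v ω‖ ^ p ∂μ) ^ ((k : ℝ) / n)) ^ ((n : ℝ) / p) := by
        refine Real.rpow_le_rpow (integral_nonneg fun ω ↦ by positivity)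
          (hint.trans ?_) (by positivity)
        gcongr
        exact integral_rpow_le_rpow_integral hv hv0 (by positivity) hkn'
    _ = A ^ (n - k) * (∫ ω, ‖v ω‖ ^ p ∂μ) ^ ((k : ℝ) / p) := by
        have hI : 0 ≤ ∫ ω, ‖v ω‖ ^ p ∂μ := integral_nonneg hv0
        rw [Real.mul_rpow (by positivity) (by positivity), ← Real.rpow_mul (by positivity),
          ← Real.rpow_mul hI, div_mul_div_cancel₀ hn'.ne', div_self hp.ne', Real.rpow_one,
          div_mul_div_cancel₀ hn'.ne']

end

theorem WeakDual.norm_apply_le_of_norm_le_one {𝕜 E : Type*} [RCLike 𝕜] [NormedAddCommGroup E]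
    [NormedSpace 𝕜 E] {φ : WeakDual 𝕜 E} (hφ : ‖toStrongDual φ‖ ≤ 1) (y : E) : ‖φ y‖ ≤ ‖y‖ :=
  ((toStrongDual φ).le_opNorm y).trans <| by
    simpa using mul_le_mul_of_nonneg_right hφ (norm_nonneg y)

theorem stmt_15_general (𝕜 : Type*) [RCLike 𝕜]
    (E : Type*) [NormedAddCommGroup E] [NormedSpace 𝕜 E]
    [MeasurableSpace (WeakDual 𝕜 E)] [BorelSpace (WeakDual 𝕜 E)]
    (μ : Measure {φ : WeakDual 𝕜 E // ‖WeakDual.toStrongDual φ‖ ≤ 1})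
    [IsProbabilityMeasure μ]
    (n : ℕ) (p : ℝ) (hp : (n : ℝ) ≤ p) :
    ∀ (a x : E) (k : ℕ), 1 ≤ k → k ≤ n →
      ((n.factorial : ℝ) / ((n - k).factorial : ℝ)) *
          (∫ φ, ‖((φ : {φ : WeakDual 𝕜 E // ‖WeakDual.toStrongDual φ‖ ≤ 1}).1 a) ^ (n - k) *
            (φ.1 x) ^ k‖ ^ (p / n) ∂μ) ^ ((n : ℝ) / p) ≤
        ((n.factorial : ℝ) / ((n - k).factorial : ℝ)) * ‖a‖ ^ (n - k) *
          (∫ φ, ‖(φ : {φ : WeakDual 𝕜 E //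
            ‖WeakDual.toStrongDual φ‖ ≤ 1}).1 x‖ ^ p ∂μ) ^ ((k : ℝ) / p) := by
  intro a x k hk hkn
  have hn : 0 < n := hk.trans hkn
  have hp0 : 0 < p := lt_of_lt_of_le (by exact_mod_cast hn) hp
  have hx : Integrable (fun φ : {φ : WeakDual 𝕜 E // ‖WeakDual.toStrongDual φ‖ ≤ 1} ↦
      ‖φ.1 x‖ ^ p) μ := by
    refine .of_bound ((Real.continuous_rpow_const hp0.le).comp_aestronglyMeasurable
      ((WeakDual.eval_continuous x).measurable.comp
        measurable_subtype_coe).norm.aestronglyMeasurable) (‖x‖ ^ p) (.of_forall fun φ ↦ ?_)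
    rw [Real.norm_of_nonneg (by positivity)]
    gcongr
    exact WeakDual.norm_apply_le_of_norm_le_one φ.2 x
  rw [mul_assoc]
  gcongr
  exact rpow_integral_norm_pow_mul_pow_le (fun φ ↦ WeakDual.norm_apply_le_of_norm_le_one φ.2 a)
    hx hp0 hn hkn

/-- For the `n`-homogeneous polynomial `P(x) = [φ ↦ φ(x)ⁿ] ∈ L_{p/n}(μ)`, whose associated
symmetric `n`-linear map is `(x₁,…,xₙ) ↦ [φ ↦ φ(x₁)⋯φ(xₙ)]`, every derivative satisfies
`‖d̂ᵏP(a)(x)‖_{L_{p/n}} = (n!/(n−k)!)·‖[φ ↦ φ(a)^{n−k}φ(x)ᵏ]‖_{L_{p/n}}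
  ≤ (n!/(n−k)!)‖a‖^{n−k}(∫|φ(x)|^p dμ)^{k/p}`,
so `μ` is a differential Pietsch measure for `P`. -/
theorem stmt_15 (𝕜 : Type*) [RCLike 𝕜]
    (E : Type*) [NormedAddCommGroup E] [NormedSpace 𝕜 E] [CompleteSpace E]
    [MeasurableSpace (WeakDual 𝕜 E)] [BorelSpace (WeakDual 𝕜 E)]
    (μ : Measure {φ : WeakDual 𝕜 E // ‖WeakDual.toStrongDual φ‖ ≤ 1})
    [IsProbabilityMeasure μ] (hreg : μ.Regular)
    (n : ℕ) (hn : 1 ≤ n) (p : ℝ) (hp : (n : ℝ) ≤ p) :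
    ∀ (a x : E) (k : ℕ), 1 ≤ k → k ≤ n →
      ((n.factorial : ℝ) / ((n - k).factorial : ℝ)) *
          (∫ φ, ‖((φ : {φ : WeakDual 𝕜 E // ‖WeakDual.toStrongDual φ‖ ≤ 1}).1 a) ^ (n - k) *
            (φ.1 x) ^ k‖ ^ (p / n) ∂μ) ^ ((n : ℝ) / p) ≤
        ((n.factorial : ℝ) / ((n - k).factorial : ℝ)) * ‖a‖ ^ (n - k) *
          (∫ φ, ‖(φ : {φ : WeakDual 𝕜 E //
            ‖WeakDual.toStrongDual φ‖ ≤ 1}).1 x‖ ^ p ∂μ) ^ ((k : ℝ) / p) :=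
  stmt_15_general 𝕜 E μ n p hp
end

section
/- Let E, G, F be Banach spaces, u : E → G a p-summing linear operator (p ≥ n ≥ 1), and Q : G → F a continuous n-homogeneous polynomial. Then P = Q ∘ u : E → F is a p-dominated n-homogeneous polynomial; explicitly, if μ is a Pietsch measure for u with constant C, then ‖P(x)‖ ≤ ‖Q‖ Cⁿ (∫_{B_{E'}} |φ(x)|^p dμ(φ))^{n/p} for all x ∈ E, so μ is a Pietsch measure for P. -/
open MeasureTheory

theorem Real.mul_rpow_one_div_pow (C : ℝ) {I : ℝ} (hI : 0 ≤ I) (p : ℝ) (n : ℕ) :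
    (C * I ^ (1 / p)) ^ n = C ^ n * I ^ ((n : ℝ) / p) := by
  rw [mul_pow, ← Real.rpow_natCast (I ^ (1 / p)) n, ← Real.rpow_mul hI, one_div_mul_eq_div]

theorem norm_le_of_homogeneous_bound_of_norm_le_rpow {G F : Type*}
    [SeminormedAddCommGroup G] [SeminormedAddCommGroup F] {Q : G → F} {M : ℝ} {n : ℕ}
    (hM : 0 ≤ M) (hQ : ∀ z, ‖Q z‖ ≤ M * ‖z‖ ^ n) {z : G} {C I p : ℝ} (hI : 0 ≤ I)
    (hz : ‖z‖ ≤ C * I ^ (1 / p)) :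
    ‖Q z‖ ≤ M * C ^ n * I ^ ((n : ℝ) / p) :=
  calc ‖Q z‖ ≤ M * ‖z‖ ^ n := hQ z
    _ ≤ M * (C * I ^ (1 / p)) ^ n := by gcongr
    _ = M * C ^ n * I ^ ((n : ℝ) / p) := by
      rw [Real.mul_rpow_one_div_pow C hI, mul_assoc]

theorem stmt_17_general (n : ℕ)
    (E : Type*) [NormedAddCommGroup E] [NormedSpace ℝ E]
    (G : Type*) [NormedAddCommGroup G] [NormedSpace ℝ G]
    (F : Type*) [NormedAddCommGroup F]
    [MeasurableSpace (WeakDual ℝ E)]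
    (μ : Measure {φ : WeakDual ℝ E // ‖WeakDual.toStrongDual φ‖ ≤ 1})
    (p : ℝ)
    (u : E →L[ℝ] G) (C : ℝ)
    (hPietsch : ∀ x : E, ‖u x‖ ≤ C * (∫ φ, ‖(φ : {φ : WeakDual ℝ E //
      ‖WeakDual.toStrongDual φ‖ ≤ 1}).1 x‖ ^ p ∂μ) ^ (1 / p))
    (Q : G → F)
    (MQ : ℝ) (hMQ : 0 ≤ MQ) (hQbound : ∀ z, ‖Q z‖ ≤ MQ * ‖z‖ ^ n) :
    ∀ x : E, ‖Q (u x)‖ ≤ MQ * C ^ n * (∫ φ, ‖(φ : {φ : WeakDual ℝ E //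
      ‖WeakDual.toStrongDual φ‖ ≤ 1}).1 x‖ ^ p ∂μ) ^ ((n : ℝ) / p) := fun x =>
  norm_le_of_homogeneous_bound_of_norm_le_rpow hMQ hQbound
    (integral_nonneg fun _ => Real.rpow_nonneg (norm_nonneg _) p) (hPietsch x)

/-- If `u : E → G` is `p`-summing with Pietsch measure `μ` and constant `C`, and
`Q : G → F` is a continuous `n`-homogeneous polynomial with `‖Q(z)‖ ≤ ‖Q‖·‖z‖ⁿ`, then
`P = Q ∘ u` is `p`-dominated: `‖P(x)‖ ≤ ‖Q‖·Cⁿ·(∫ |φ(x)|^p dμ)^{n/p}`, so `μ` is a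
Pietsch measure for `P`. -/
theorem stmt_17 (n : ℕ) (hn : 1 ≤ n)
    (E : Type*) [NormedAddCommGroup E] [NormedSpace ℝ E] [CompleteSpace E]
    (G : Type*) [NormedAddCommGroup G] [NormedSpace ℝ G] [CompleteSpace G]
    (F : Type*) [NormedAddCommGroup F] [NormedSpace ℝ F] [CompleteSpace F]
    [MeasurableSpace (WeakDual ℝ E)] [BorelSpace (WeakDual ℝ E)]
    (μ : Measure {φ : WeakDual ℝ E // ‖WeakDual.toStrongDual φ‖ ≤ 1})
    [IsProbabilityMeasure μ] (hreg : μ.Regular)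
    (p : ℝ) (hp : (n : ℝ) ≤ p)
    (u : E →L[ℝ] G) (C : ℝ) (hC : 0 < C)
    (hPietsch : ∀ x : E, ‖u x‖ ≤ C * (∫ φ, ‖(φ : {φ : WeakDual ℝ E //
      ‖WeakDual.toStrongDual φ‖ ≤ 1}).1 x‖ ^ p ∂μ) ^ (1 / p))
    (Q : G → F) (Qc : ContinuousMultilinearMap ℝ (fun _ : Fin n => G) F)
    (hQhom : ∀ z, Q z = Qc (fun _ => z))
    (MQ : ℝ) (hMQ : 0 ≤ MQ) (hQbound : ∀ z, ‖Q z‖ ≤ MQ * ‖z‖ ^ n) :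
    ∀ x : E, ‖Q (u x)‖ ≤ MQ * C ^ n * (∫ φ, ‖(φ : {φ : WeakDual ℝ E //
      ‖WeakDual.toStrongDual φ‖ ≤ 1}).1 x‖ ^ p ∂μ) ^ ((n : ℝ) / p) :=
  stmt_17_general n E G F μ p u C hPietsch Q MQ hMQ hQbound
end
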